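/- arXiv:math/0703812 — 3 statements merged into one kernel-verified Lean document; each statement's English description precedes it below -/
import Mathlib

section
/- For every continuous function φ : S² → ℝ and every v ∈ S², one has (1/π) ∫_{{ω ∈ S² : v·ω > 0}} (φ(v − 2(v·ω)ω) − φ(v)) (v·ω) dω = (1/(4π)) ∫_{S²} (φ(w) − φ(v)) dw, where both integrals are taken with respect to the (unnormalized) surface measure on S² (of total mass 4π). In particular the Lorentz collision integral coincides with a linear Boltzmann collision integral with constant kernel k(v,w) ≡ 1/(4π). -/
open MeasureTheory Metric Set Filter Topology
open scoped ENNReal RealInnerProductSpace Real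

noncomputable section

abbrev EucSp (D : ℕ) := EuclideanSpace ℝ (Fin D)
abbrev Sph (D : ℕ) := Metric.sphere (0 : EucSp D) 1
def sphArea (D : ℕ) : Measure (Sph D) := (volume : Measure (EucSp D)).toSphere

/-- The specular reflection `v - 2 (v·ω) ω` of a unit vector `v` with respect to the
hyperplane orthogonal to the unit vector `ω`; it is again a unit vector. -/
def specReflect (v ω : Sph 3) : Sph 3 :=
  ⟨(v : EucSp 3) - (2 * ⟪(v : EucSp 3), (ω : EucSp 3)⟫) • (ω : EucSp 3), by
    have hv : ‖(v : EucSp 3)‖ = 1 := by simpa using v.2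
    have hω : ‖(ω : EucSp 3)‖ = 1 := by simpa using ω.2
    rw [mem_sphere_zero_iff_norm]
    have h2 : ‖(v : EucSp 3) - (2 * ⟪(v : EucSp 3), (ω : EucSp 3)⟫) • (ω : EucSp 3)‖ ^ 2 = 1 := by
      rw [norm_sub_sq_real, real_inner_smul_right, norm_smul, hv, hω]
      simp [mul_pow, sq_abs]
      ring
    nlinarith [norm_nonneg ((v : EucSp 3) - (2 * ⟪(v : EucSp 3), (ω : EucSp 3)⟫) • (ω : EucSp 3))]⟩

/-!
The reflection `R_v ω = v - 2 ⟪v, ω⟫ ω` is the restriction to the sphere of the quadratic map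
`F x = ⟪x, x⟫ v - 2 ⟪v, x⟫ x`, since `F (r ω) = r² R_v ω`. On the open half-ball
`{‖x‖ < 1, ⟪v, x⟫ > 0}` the map `F` is injective, its image is the unit ball minus the ray `ℝ₊ v`,
and `|det DF x| = 8 ‖x‖² ⟪v, x⟫`. Polar coordinates turn the hemisphere integral of
`ψ (R_v ω) ⟪v, ω⟫` into `6` times the half-ball integral of
`ψ (R_v x̂) ⟪v, x⟫ ‖x‖² = ψ (F x / ‖F x‖) |det DF x| / 8`, which the change of variables `y = F x`
turns into `1/8` of the ball integral of `ψ (y / ‖y‖)`, that is `1/3` of `∫ ψ`. So the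
cosine-weighted pushforward of the hemisphere under `R_v` is `6 · 1/8 · 1/3 = 1/4` of the surface
measure.
-/

section Polar

theorem integral_volumeIoiPow (n : ℕ) (h : ℝ → ℝ) :
    ∫ r : Ioi (0 : ℝ), h r ∂(Measure.volumeIoiPow n) = ∫ r in Ioi (0 : ℝ), r ^ n * h r := by
  simp only [Measure.volumeIoiPow, ENNReal.ofReal]
  rw [integral_withDensity_eq_integral_smul
      (measurable_subtype_coe.pow_const _).real_toNNReal,
    integral_subtype_comap measurableSet_Ioi fun r ↦ Real.toNNReal (r ^ n) • h r,
    setIntegral_congr_fun measurableSet_Ioi fun r hr ↦ ?_]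
  rw [NNReal.smul_def, Real.coe_toNNReal _ (pow_nonneg hr.out.le _), smul_eq_mul]

theorem integral_Ioi_pow_mul_indicator_Iio_one (n k : ℕ) :
    ∫ r in Ioi (0 : ℝ), r ^ n * (Iio 1).indicator (· ^ k) r = 1 / (n + k + 1) := by
  calc ∫ r in Ioi (0 : ℝ), r ^ n * (Iio 1).indicator (· ^ k) r
      = ∫ r in Ioi (0 : ℝ), (Iio 1).indicator (· ^ (n + k)) r := by
        congr with r
        by_cases hr : r < 1 <;> simp [hr, pow_add]
    _ = ∫ r in (0 : ℝ)..1, r ^ (n + k) := by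
        rw [setIntegral_indicator measurableSet_Iio, Ioi_inter_Iio,
          intervalIntegral.integral_of_le zero_le_one]
        exact setIntegral_congr_set Ioo_ae_eq_Ioc
    _ = 1 / (n + k + 1) := by
        rw [integral_pow]
        simp

variable {E : Type*} [NormedAddCommGroup E] [NormedSpace ℝ E] [Nontrivial E]

open scoped Classical in
/-- The origin, a null set for every Haar measure, is sent to an arbitrary point. -/
def sphereProj (x : E) : sphere (0 : E) 1 :=
  if hx : x = 0 then
    ⟨_, (NormedSpace.sphere_nonempty.2 zero_le_one).some_mem⟩
  else (homeomorphUnitSphereProd E ⟨x, hx⟩).1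

theorem sphereProj_of_ne_zero {x : E} (hx : x ≠ 0) :
    sphereProj x = (homeomorphUnitSphereProd E ⟨x, hx⟩).1 :=
  dif_neg hx

theorem coe_sphereProj {x : E} (hx : x ≠ 0) : (sphereProj x : E) = ‖x‖⁻¹ • x := by
  rw [sphereProj_of_ne_zero hx, homeomorphUnitSphereProd_apply_fst_coe]

variable [MeasurableSpace E] [BorelSpace E] [FiniteDimensional ℝ E]
  (μ : Measure E) [μ.IsAddHaarMeasure]

theorem integral_comp_sphereProj_mul (f : sphere (0 : E) 1 → ℝ) (h : ℝ → ℝ) :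
    ∫ x, f (sphereProj x) * h ‖x‖ ∂μ =
      (∫ ω, f ω ∂μ.toSphere) * ∫ r in Ioi (0 : ℝ), r ^ (Module.finrank ℝ E - 1) * h r := by
  calc ∫ x, f (sphereProj x) * h ‖x‖ ∂μ
      = ∫ x : ({0}ᶜ : Set E), f (sphereProj x.1) * h ‖x.1‖ ∂(μ.comap (↑)) := by
        rw [integral_subtype_comap (measurableSet_singleton _).compl
          (fun x ↦ f (sphereProj x) * h ‖x‖), restrict_compl_singleton]
    _ = ∫ p, f p.1 * h p.2 ∂(μ.toSphere.prod (.volumeIoiPow (Module.finrank ℝ E - 1))) := by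
        rw [← μ.measurePreserving_homeomorphUnitSphereProd.integral_comp
          (Homeomorph.measurableEmbedding _)]
        congr with x
        rw [sphereProj_of_ne_zero x.2, homeomorphUnitSphereProd_apply_snd_coe]
    _ = _ := by rw [integral_prod_mul f (fun r : Ioi (0 : ℝ) ↦ h r), integral_volumeIoiPow]

theorem setIntegral_ball_comp_sphereProj_mul_norm_pow (f : sphere (0 : E) 1 → ℝ) (k : ℕ) :
    ∫ x in ball (0 : E) 1, f (sphereProj x) * ‖x‖ ^ k ∂μ =
      (∫ ω, f ω ∂μ.toSphere) / (Module.finrank ℝ E + k) := by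
  have hball : (ball (0 : E) 1).indicator (fun x ↦ f (sphereProj x) * ‖x‖ ^ k) =
      fun x ↦ f (sphereProj x) * (Iio 1).indicator (· ^ k) ‖x‖ := by
    ext x
    by_cases hx : ‖x‖ < 1 <;> simp [indicator, hx]
  rw [← integral_indicator measurableSet_ball, hball, integral_comp_sphereProj_mul,
    integral_Ioi_pow_mul_indicator_Iio_one, Nat.cast_pred Module.finrank_pos]
  ring

end Polar

section HomogReflect

variable {E : Type*} [NormedAddCommGroup E] [InnerProductSpace ℝ E]

/-- The degree-two homogeneous extension `x ↦ ‖x‖² (v - 2 ⟪v, x̂⟫ x̂)` of the specular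
reflection of `v`, written without `x̂ = x / ‖x‖` so that it is a polynomial map. -/
def homogReflect (v x : E) : E := ⟪x, x⟫ • v - (2 * ⟪v, x⟫) • x

def homogReflectDeriv (v x : E) : E →L[ℝ] E :=
  (2 : ℝ) • (innerSL ℝ x).smulRight v - (2 : ℝ) • (innerSL ℝ v).smulRight x
    - (2 * ⟪v, x⟫) • ContinuousLinearMap.id ℝ E

theorem homogReflectDeriv_apply (v x u : E) :
    homogReflectDeriv v x u = (2 * ⟪x, u⟫) • v - (2 * ⟪v, u⟫) • x - (2 * ⟪v, x⟫) • u := by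
  simp [homogReflectDeriv, mul_smul]

theorem hasFDerivAt_homogReflect (v x : E) :
    HasFDerivAt (homogReflect v) (homogReflectDeriv v x) x := by
  have hsq := ((hasFDerivAt_id x).inner ℝ (hasFDerivAt_id x)).smul (hasFDerivAt_const v x)
  have hlin := (((hasFDerivAt_const v x).inner ℝ (hasFDerivAt_id x)).const_mul 2).smul
    (hasFDerivAt_id x)
  refine (hsq.sub hlin).congr_fderiv (ContinuousLinearMap.ext fun u ↦ ?_)
  simp [homogReflectDeriv_apply, fderivInnerCLM_apply, real_inner_comm u x]
  module

theorem norm_homogReflect {v : E} (hv : ‖v‖ = 1) (x : E) : ‖homogReflect v x‖ = ‖x‖ ^ 2 := by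
  refine (pow_left_inj₀ (norm_nonneg _) (by positivity) two_ne_zero).1 ?_
  rw [← real_inner_self_eq_norm_sq, homogReflect]
  simp only [inner_sub_left, inner_sub_right, real_inner_smul_left, real_inner_smul_right]
  simp only [real_inner_self_eq_norm_sq, hv, real_inner_comm x v]
  ring

theorem inner_homogReflect {v : E} (hv : ‖v‖ = 1) (x : E) :
    ⟪v, homogReflect v x⟫ = ‖x‖ ^ 2 - 2 * ⟪v, x⟫ ^ 2 := by
  simp only [homogReflect, inner_sub_right, real_inner_smul_right, real_inner_self_eq_norm_sq, hv]
  ring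

theorem homogReflect_injOn {v : E} (hv : ‖v‖ = 1) : InjOn (homogReflect v) {x | 0 < ⟪v, x⟫} := by
  intro x hx y hy hxy
  have hnorm : ‖x‖ ^ 2 = ‖y‖ ^ 2 := by
    rw [← norm_homogReflect hv, ← norm_homogReflect hv, hxy]
  have hinner : ⟪v, x⟫ = ⟪v, y⟫ := by
    have := congrArg (⟪v, ·⟫) hxy
    simp only [inner_homogReflect hv, hnorm] at this
    nlinarith [hx.out, hy.out]
  have hsmul : (2 * ⟪v, x⟫) • x = (2 * ⟪v, x⟫) • y := by
    have := congrArg (‖x‖ ^ 2 • v - ·) hxy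
    simpa [homogReflect, real_inner_self_eq_norm_sq, hnorm, hinner] using this
  exact smul_right_injective E (by linarith [hx.out]) hsmul

theorem homogReflect_smul (v x : E) (s : ℝ) :
    homogReflect v (s • x) = s ^ 2 • homogReflect v x := by
  simp only [homogReflect, real_inner_smul_left, real_inner_smul_right]
  module

theorem exists_homogReflect_eq {v y : E} (hv : ‖v‖ = 1) (hy : y ≠ ‖y‖ • v) :
    ∃ x, 0 < ⟪v, x⟫ ∧ homogReflect v x = y := by
  set u := ‖y‖ • v - y
  have hu : u ≠ 0 := sub_ne_zero.2 hy.symm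
  have hvu : ⟪v, u⟫ = ‖y‖ - ⟪v, y⟫ := by
    simp only [u, inner_sub_right, real_inner_smul_right, real_inner_self_eq_norm_sq, hv]
    ring
  have hFu : homogReflect v u = (2 * ⟪v, u⟫) • y := by
    simp only [homogReflect, hvu]
    simp only [u, inner_sub_left, inner_sub_right, real_inner_smul_left, real_inner_smul_right]
    simp only [real_inner_self_eq_norm_sq, hv, real_inner_comm y v]
    module
  have hpos : 0 < ⟪v, u⟫ := by
    have hnorm : ‖u‖ ^ 2 = 2 * ‖y‖ * ⟪v, u⟫ := by
      rw [norm_sub_sq_real, hvu, norm_smul, real_inner_smul_left, hv, norm_norm]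
      ring
    nlinarith [norm_pos_iff.2 hu, norm_nonneg y]
  refine ⟨(√(2 * ⟪v, u⟫))⁻¹ • u, ?_, ?_⟩
  · rw [real_inner_smul_right]
    positivity
  · rw [homogReflect_smul, hFu, smul_smul, inv_pow, Real.sq_sqrt (by positivity),
      inv_mul_cancel₀ (by positivity), one_smul]

theorem image_homogReflect_ae_eq_ball [FiniteDimensional ℝ E] [MeasurableSpace E] [BorelSpace E]
    (μ : Measure E) [μ.IsAddHaarMeasure] (hE : 1 < Module.finrank ℝ E) {v : E} (hv : ‖v‖ = 1) :
    homogReflect v '' (ball 0 1 ∩ {x | 0 < ⟪v, x⟫}) =ᵐ[μ] ball (0 : E) 1 := by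
  have hsub : homogReflect v '' (ball 0 1 ∩ {x | 0 < ⟪v, x⟫}) ⊆ ball 0 1 := by
    rintro _ ⟨x, ⟨hx, -⟩, rfl⟩
    rw [mem_ball_zero_iff] at hx ⊢
    rw [norm_homogReflect hv]
    nlinarith [norm_nonneg x]
  have hrest : ball 0 1 \ homogReflect v '' (ball 0 1 ∩ {x | 0 < ⟪v, x⟫}) ⊆ ℝ ∙ v := by
    rintro y ⟨hy, hy_notMem⟩
    by_contra hyv
    obtain ⟨x, hx, rfl⟩ :=
      exists_homogReflect_eq hv fun h ↦ hyv (Submodule.mem_span_singleton.2 ⟨‖y‖, h.symm⟩)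
    refine hy_notMem ⟨x, ⟨?_, hx⟩, rfl⟩
    rw [mem_ball_zero_iff, norm_homogReflect hv] at hy
    rw [mem_ball_zero_iff]
    nlinarith [norm_nonneg x]
  have hline : (ℝ ∙ v) ≠ ⊤ := fun h ↦ by
    have := finrank_span_singleton (K := ℝ) (norm_ne_zero_iff.1 (hv.trans_ne one_ne_zero))
    rw [h, finrank_top] at this
    omega
  refine ae_eq_set.2 ⟨by rw [sdiff_eq_empty.2 hsub, measure_empty], ?_⟩
  exact measure_mono_null hrest (Measure.addHaar_submodule μ _ hline)

end HomogReflect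

theorem inner_sphereProj_pos_iff {E : Type*} [NormedAddCommGroup E] [InnerProductSpace ℝ E]
    [Nontrivial E] (w : E) {x : E} (hx : x ≠ 0) :
    0 < ⟪w, (sphereProj x : E)⟫ ↔ 0 < ⟪w, x⟫ := by
  rw [coe_sphereProj hx, real_inner_smul_right]
  exact mul_pos_iff_of_pos_left (inv_pos.2 (norm_pos_iff.2 hx))

theorem det_homogReflectDeriv (v x : EucSp 3) :
    (homogReflectDeriv v x).det = -(8 * ⟪v, v⟫ * ⟪x, x⟫ * ⟪v, x⟫) := by
  rw [ContinuousLinearMap.det,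
    ← LinearMap.det_toMatrix (EuclideanSpace.basisFun (Fin 3) ℝ).toBasis, Matrix.det_fin_three]
  simp only [LinearMap.toMatrix_apply, OrthonormalBasis.coe_toBasis,
    OrthonormalBasis.coe_toBasis_repr_apply, EuclideanSpace.basisFun_repr,
    EuclideanSpace.basisFun_apply, ContinuousLinearMap.coe_coe, homogReflectDeriv_apply,
    PiLp.sub_apply, PiLp.smul_apply, PiLp.single_apply, PiLp.inner_apply, Fin.sum_univ_three,
    RCLike.inner_apply, Real.ringHom_apply, smul_eq_mul, Fin.reduceEq, ↓reduceIte]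
  ring

theorem coe_specReflect (v ω : Sph 3) :
    (specReflect v ω : EucSp 3) = (v : EucSp 3) - (2 * ⟪(v : EucSp 3), ω⟫) • (ω : EucSp 3) :=
  rfl

theorem specReflect_sphereProj (v : Sph 3) {x : EucSp 3} (hx : x ≠ 0) :
    specReflect v (sphereProj x) = sphereProj (homogReflect (v : EucSp 3) x) := by
  have hv : ‖(v : EucSp 3)‖ = 1 := norm_eq_of_mem_sphere v
  have hFx : homogReflect (v : EucSp 3) x ≠ 0 := by
    rw [← norm_ne_zero_iff, norm_homogReflect hv]
    exact pow_ne_zero 2 (norm_ne_zero_iff.2 hx)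
  have hxn : ‖x‖ ≠ 0 := norm_ne_zero_iff.2 hx
  ext1
  rw [coe_specReflect, coe_sphereProj hx, coe_sphereProj hFx, norm_homogReflect hv, homogReflect,
    real_inner_smul_right, real_inner_self_eq_norm_sq]
  match_scalars <;> field_simp

theorem hemisphere_indicator_comp_sphereProj_mul_norm_pow_three (v : Sph 3) (ψ : Sph 3 → ℝ)
    (x : EucSp 3) :
    {ω : Sph 3 | 0 < ⟪(v : EucSp 3), ω⟫}.indicator
        (fun ω ↦ ψ (specReflect v ω) * ⟪(v : EucSp 3), ω⟫) (sphereProj x) * ‖x‖ ^ 3 =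
      {x | 0 < ⟪(v : EucSp 3), x⟫}.indicator (fun x ↦ 8⁻¹ *
        (|(homogReflectDeriv (v : EucSp 3) x).det| • ψ (sphereProj (homogReflect (v : EucSp 3) x))))
        x := by
  have hv : ‖(v : EucSp 3)‖ = 1 := norm_eq_of_mem_sphere v
  by_cases hxv : 0 < ⟪(v : EucSp 3), x⟫
  · have hx : x ≠ 0 := by rintro rfl; simp at hxv
    simp only [indicator_apply, mem_ofPred_eq, inner_sphereProj_pos_iff _ hx, if_pos hxv]
    rw [specReflect_sphereProj v hx, det_homogReflectDeriv, coe_sphereProj hx,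
      real_inner_smul_right, real_inner_self_eq_norm_sq, real_inner_self_eq_norm_sq, hv,
      smul_eq_mul, abs_of_nonpos (by nlinarith [norm_nonneg x])]
    field_simp
  · rcases eq_or_ne x 0 with rfl | hx
    · simp
    · simp only [indicator_apply, mem_ofPred_eq, inner_sphereProj_pos_iff _ hx, if_neg hxv,
        zero_mul]

theorem setIntegral_hemisphere_comp_specReflect_mul_inner (v : Sph 3) (ψ : Sph 3 → ℝ) :
    ∫ ω in {ω : Sph 3 | 0 < ⟪(v : EucSp 3), ω⟫}, ψ (specReflect v ω) * ⟪(v : EucSp 3), ω⟫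
        ∂(sphArea 3) = 4⁻¹ * ∫ w, ψ w ∂(sphArea 3) := by
  have hv : ‖(v : EucSp 3)‖ = 1 := norm_eq_of_mem_sphere v
  have hdim : Module.finrank ℝ (EucSp 3) = 3 := finrank_euclideanSpace_fin
  set B := ball (0 : EucSp 3) 1
  set C := {x : EucSp 3 | 0 < ⟪(v : EucSp 3), x⟫}
  have hH : MeasurableSet {ω : Sph 3 | 0 < ⟪(v : EucSp 3), ω⟫} :=
    (isOpen_lt continuous_const (continuous_const.inner continuous_subtype_val)).measurableSet
  have hC : MeasurableSet C := (isOpen_lt continuous_const (by fun_prop)).measurableSet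
  have hball := setIntegral_ball_comp_sphereProj_mul_norm_pow (volume : Measure (EucSp 3))
  simp only [hdim] at hball
  unfold sphArea
  calc _ = 6 * ∫ x in B, {ω : Sph 3 | 0 < ⟪(v : EucSp 3), ω⟫}.indicator
          (fun ω ↦ ψ (specReflect v ω) * ⟪(v : EucSp 3), ω⟫) (sphereProj x) * ‖x‖ ^ 3 := by
        rw [← integral_indicator hH, hball]
        ring
    _ = 6 * (8⁻¹ * ∫ x in B ∩ C, |(homogReflectDeriv (v : EucSp 3) x).det| •
          ψ (sphereProj (homogReflect (v : EucSp 3) x))) := by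
        simp only [hemisphere_indicator_comp_sphereProj_mul_norm_pow_three]
        rw [setIntegral_indicator hC, integral_const_mul]
    _ = 6 * (8⁻¹ * ∫ y in homogReflect (v : EucSp 3) '' (B ∩ C), ψ (sphereProj y)) := by
        rw [integral_image_eq_integral_abs_det_fderiv_smul volume (measurableSet_ball.inter hC)
          (fun x _ ↦ (hasFDerivAt_homogReflect _ x).hasFDerivWithinAt)
          ((homogReflect_injOn hv).mono inter_subset_right)]
    _ = 6 * (8⁻¹ * ∫ y in B, ψ (sphereProj y) * ‖y‖ ^ 0) := by
        simp only [pow_zero, mul_one]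
        rw [setIntegral_congr_set (image_homogReflect_ae_eq_ball volume (by omega) hv)]
    _ = 4⁻¹ * ∫ w, ψ w ∂(volume : Measure (EucSp 3)).toSphere := by
        rw [hball]
        ring

theorem lorentz_collision_eq_boltzmann_general (φ : Sph 3 → ℝ) (v : Sph 3) :
    (1 / π) * ∫ ω in {ω : Sph 3 | 0 < ⟪(v : EucSp 3), (ω : EucSp 3)⟫},
        (φ (specReflect v ω) - φ v) * ⟪(v : EucSp 3), (ω : EucSp 3)⟫ ∂(sphArea 3)
      = (1 / (4 * π)) * ∫ w, (φ w - φ v) ∂(sphArea 3) := by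
  rw [setIntegral_hemisphere_comp_specReflect_mul_inner v (φ · - φ v)]
  ring

/-- The Lorentz collision integral on `S²` coincides with a linear Boltzmann collision
integral with constant kernel `k(v,w) ≡ 1/(4π)`: for every continuous `φ : S² → ℝ` and
every `v ∈ S²`,
`(1/π) ∫_{v·ω > 0} (φ(v - 2(v·ω)ω) - φ(v)) (v·ω) dω = (1/(4π)) ∫_{S²} (φ(w) - φ(v)) dw`,
both integrals being with respect to the surface measure on `S²` (of total mass `4π`). -/
theorem lorentz_collision_eq_boltzmann (φ : Sph 3 → ℝ) (hφ : Continuous φ) (v : Sph 3) :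
    (1 / π) * ∫ ω in {ω : Sph 3 | 0 < ⟪(v : EucSp 3), (ω : EucSp 3)⟫},
        (φ (specReflect v ω) - φ v) * ⟪(v : EucSp 3), (ω : EucSp 3)⟫ ∂(sphArea 3)
      = (1 / (4 * π)) * ∫ w, (φ w - φ v) ∂(sphArea 3) :=
  lorentz_collision_eq_boltzmann_general φ v
end
end

section
/- Let D ≥ 2 and r ∈ (0,1/2). If v ∈ S^{D-1} satisfies k·v ≠ 0 for every k ∈ ℤ^D \ {0}, then τ_r(x,v) < +∞ for every x ∈ Z_r. -/
open MeasureTheory Metric Set Filter Topology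
open scoped ENNReal RealInnerProductSpace

noncomputable section

/-- The integer lattice `ℤ^D ⊆ ℝ^D`. -/
def intLattice (D : ℕ) : Set (EucSp D) := {x | ∀ i, ∃ m : ℤ, x i = (m : ℝ)}

/-- The free path length (forward exit time) `τ_r(x,v)` of the periodic Lorentz gas:
the infimum of times `t > 0` such that `x + t v` is within distance `r` of the lattice,
`+∞` if there is no such time, and `0` if `x` itself is within distance `r` of the lattice. -/
def freePath (D : ℕ) (r : ℝ) (x v : EucSp D) : ℝ≥0∞ :=
  if Metric.infDist x (intLattice D) ≤ r then 0
  else sInf (ENNReal.ofReal '' {t : ℝ | 0 < t ∧ Metric.infDist (x + t • v) (intLattice D) ≤ r})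

/-- The rotationally invariant probability measure on the unit sphere `S^{D-1}`. -/
def sphProb (D : ℕ) : Measure (Sph D) := (sphArea D Set.univ)⁻¹ • sphArea D

/-- The unit torus `T^D = ℝ^D/ℤ^D`, realized as a product of unit circles. -/
abbrev Torus (D : ℕ) := Fin D → AddCircle (1 : ℝ)

/-- The canonical projection `ℝ^D → T^D`. -/
def toTorus (D : ℕ) (x : EucSp D) : Torus D := fun i => (x i : AddCircle (1 : ℝ))

/-- The representative in `[0,1)^D` of a point of the torus `T^D`. -/
def torusRep (D : ℕ) (x : Torus D) : EucSp D := WithLp.toLp 2 (fun i => ((AddCircle.equivIco 1 0 (x i) : Set.Ico (0:ℝ) (0+1)) : ℝ))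

/-- The fundamental domain `[0,1)^D` of the lattice `ℤ^D`. -/
def unitBox (D : ℕ) : Set (EucSp D) := {x | ∀ i, x i ∈ Set.Ico (0:ℝ) 1}

/-- `Y_r`: the part of the fundamental domain `[0,1)^D` lying at distance `> r` from `ℤ^D`. -/
def YrSet (D : ℕ) (r : ℝ) : Set (EucSp D) := {y ∈ unitBox D | r < Metric.infDist y (intLattice D)}

/-- `Φ_r(t) = μ_r({(y,v) ∈ Y_r × S^{D-1} : τ_r(y,v) ≥ t})`, where
`μ_r = dy dv / (|Y_r| |S^{D-1}|)` is normalized Lebesgue measure. -/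
def pathDistrib (D : ℕ) (r t : ℝ) : ℝ≥0∞ :=
  ((volume.restrict (YrSet D r)).prod (sphProb D))
      {p : EucSp D × Sph D | ENNReal.ofReal t ≤ freePath D r p.1 p.2}
    / volume (YrSet D r)

/-!
Let `G` be the closure of `ℝ v + ℤ^D`. A closed subgroup of `ℝ^D` contains a largest subspace `V`;
since `V ⊆ G`, the projection of `G` to a complement `W` of `V` lies in `G ∩ W`, which is discrete
(a closed subgroup with arbitrarily small nonzero elements contains a whole line). So if
`G ≠ ℝ^D`, then `W ≠ 0` and `G ∩ W` is a lattice of `W` or lies in a hyperplane of `W`; either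
way some linear form `f ≠ 0` is integral on `G`.
Integrality on the line `ℝ v` forces `f v = 0`, and then `k = (f eᵢ)ᵢ` is a nonzero integer
vector with `k · v = f v = 0`. Hence `ℝ v + ℤ^D` is dense (Kronecker).

To hit the `r`-neighbourhood of `ℤ^D` at a *positive* time, use compactness of a fundamental
domain: one time window `[-N, N]` serves all starting points of the domain, and starting from
`x + (N + 1) v`, reduced mod `ℤ^D`, makes every time in that window positive.
-/

theorem Metric.infDist_add_left_of_mem {E S : Type*} [SeminormedAddCommGroup E] [SetLike S E]
    [AddSubgroupClass S E] {s : S} {w : E} (hw : w ∈ s) (z : E) :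
    infDist (w + z) s = infDist z s := by
  rw [Metric.infDist, Metric.infDist, ← vadd_eq_add, ← infEDist_vadd w z (s : Set E),
    vadd_coe_set hw]

section LineModLattice

variable {E : Type*} [NormedAddCommGroup E] [NormedSpace ℝ E]

theorem norm_zsmul_floor_div_sub_le (y : E) (t : ℝ) :
    ‖⌊t / ‖y‖⌋ • y - t • (‖y‖⁻¹ • y)‖ ≤ ‖y‖ := by
  rw [← Int.cast_smul_eq_zsmul ℝ, smul_smul, ← div_eq_mul_inv, ← sub_smul, norm_smul,
    Real.norm_eq_abs, abs_sub_comm, Int.self_sub_floor, abs_of_nonneg (Int.fract_nonneg _)]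
  exact mul_le_of_le_one_left (norm_nonneg y) (Int.fract_lt_one _).le

theorem AddSubgroup.exists_forall_smul_mem_of_forall_exists_norm_lt [ProperSpace E]
    {H : AddSubgroup E} (hH : IsClosed (H : Set E)) (h : ∀ ε > 0, ∃ y ∈ H, y ≠ 0 ∧ ‖y‖ < ε) :
    ∃ u ≠ (0 : E), ∀ t : ℝ, t • u ∈ H := by
  choose y hyH hy0 hyε using fun n : ℕ => h (1 / (n + 1)) Nat.one_div_pos_of_nat
  have hy : Tendsto (fun n => ‖y n‖) atTop (𝓝 0) :=
    squeeze_zero (fun n => norm_nonneg _) (fun n => (hyε n).le)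
      tendsto_one_div_add_atTop_nhds_zero_nat
  have hsphere : ∀ n, ‖y n‖⁻¹ • y n ∈ sphere (0 : E) 1 := fun n => by
    simp [norm_smul, hy0 n]
  obtain ⟨u, hu, φ, hφ, hφu⟩ := (isCompact_sphere (0 : E) 1).tendsto_subseq hsphere
  refine ⟨u, ne_zero_of_mem_sphere one_ne_zero ⟨u, hu⟩, fun t => ?_⟩
  have hnear : Tendsto (fun n => ⌊t / ‖y (φ n)‖⌋ • y (φ n) - t • (‖y (φ n)‖⁻¹ • y (φ n)))
      atTop (𝓝 0) :=
    squeeze_zero_norm (fun n => norm_zsmul_floor_div_sub_le _ t) (hy.comp hφ.tendsto_atTop)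
  have hlim : Tendsto (fun n => ⌊t / ‖y (φ n)‖⌋ • y (φ n)) atTop (𝓝 (t • u)) := by
    simpa using hnear.add (hφu.const_smul t)
  exact hH.mem_of_tendsto hlim (.of_forall fun n => H.zsmul_mem (hyH _) _)

def AddSubgroup.linealitySpace (G : AddSubgroup E) : Submodule ℝ E where
  carrier := {x | ∀ t : ℝ, t • x ∈ G}
  add_mem' hx hy t := by rw [smul_add]; exact G.add_mem (hx t) (hy t)
  zero_mem' t := by rw [smul_zero]; exact G.zero_mem
  smul_mem' c x hx t := by rw [smul_smul]; exact hx (t * c)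

theorem AddSubgroup.linealitySpace_subset (G : AddSubgroup E) :
    (G.linealitySpace : Set E) ⊆ G := fun x hx => by
  simpa using hx 1

theorem Submodule.exists_ne_zero_forall_mem_int_of_discreteTopology [FiniteDimensional ℝ E]
    [Nontrivial E] (L : Submodule ℤ E) [DiscreteTopology L] :
    ∃ f : E →ₗ[ℝ] ℝ, f ≠ 0 ∧ ∀ w ∈ L, ∃ m : ℤ, f w = m := by
  by_cases hspan : span ℝ (L : Set E) = ⊤
  · have : IsZLattice ℝ L := ⟨hspan⟩
    let b := Module.Free.chooseBasis ℤ L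
    obtain ⟨i⟩ := (b.ofZLatticeBasis ℝ L).index_nonempty
    refine ⟨(b.ofZLatticeBasis ℝ L).coord i, ?_, fun w hw => ⟨b.repr ⟨w, hw⟩ i, ?_⟩⟩
    · exact fun h => by simpa using LinearMap.congr_fun h (b.ofZLatticeBasis ℝ L i)
    · exact b.ofZLatticeBasis_repr_apply ℝ L ⟨w, hw⟩ i
  · obtain ⟨f, hf, hle⟩ :=
      (span ℝ (L : Set E)).exists_le_ker_of_lt_top (lt_top_iff_ne_top.2 hspan)
    exact ⟨f, hf, fun w hw => ⟨0, by simpa using hle (subset_span hw)⟩⟩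

theorem AddSubgroup.exists_ne_zero_forall_mem_int_of_isClosed [FiniteDimensional ℝ E]
    {G : AddSubgroup E} (hG : IsClosed (G : Set E)) (hGtop : G ≠ ⊤) :
    ∃ f : E →ₗ[ℝ] ℝ, f ≠ 0 ∧ ∀ g ∈ G, ∃ m : ℤ, f g = m := by
  set V := G.linealitySpace
  obtain ⟨W, hVW⟩ := V.exists_isCompl
  set P := W.projectionOnto V hVW.symm
  set L : Submodule ℤ W := (AddSubgroup.toIntSubmodule G).comap (W.subtype.restrictScalars ℤ)
  have hPL : ∀ g ∈ G, P g ∈ L := fun g hg => by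
    have := G.sub_mem hg (G.linealitySpace_subset (W.sub_projection_mem hVW.symm g))
    show ((P g : W) : E) ∈ G
    simpa [P] using this
  have hLclosed : IsClosed (L.toAddSubgroup : Set W) := hG.preimage continuous_subtype_val
  have hLsep : ∃ ε > 0, ∀ w ∈ L, w ≠ 0 → ε ≤ ‖w‖ := by
    by_contra! hsmall
    obtain ⟨u, hu0, hu⟩ :=
      L.toAddSubgroup.exists_forall_smul_mem_of_forall_exists_norm_lt hLclosed hsmall
    have huV : (u : E) ∈ V := fun t => hu t
    exact hu0 (Subtype.ext (hVW.disjoint.le_bot ⟨huV, u.2⟩))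
  obtain ⟨ε, hε, hLsep⟩ := hLsep
  have : DiscreteTopology L := .of_forall_le_norm hε fun w hw => hLsep w w.2 (by simpa using hw)
  have : Nontrivial W := Submodule.nontrivial_iff_ne_bot.2 fun hW => by
    have hV : V = ⊤ := eq_top_of_isCompl_bot (hW ▸ hVW)
    exact hGtop <| eq_top_iff.2 fun x _ =>
      G.linealitySpace_subset (show x ∈ V from hV ▸ Submodule.mem_top)
  obtain ⟨φ, hφ, hφL⟩ := L.exists_ne_zero_forall_mem_int_of_discreteTopology
  refine ⟨φ ∘ₗ P, fun h => hφ (LinearMap.ext fun w => ?_), fun g hg => hφL _ (hPL g hg)⟩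
  simpa [P] using LinearMap.congr_fun h w

theorem eq_zero_of_forall_exists_int_mul_eq {c : ℝ} (h : ∀ t : ℝ, ∃ m : ℤ, t * c = m) :
    c = 0 := by
  by_contra hc
  obtain ⟨m, hm⟩ := h (2 * c)⁻¹
  have : (2 * m : ℤ) = 1 := by
    rw [← @Int.cast_inj ℝ]
    push_cast
    rw [← hm]
    field_simp
  omega

variable {ι : Type*} [Fintype ι]

theorem dense_span_singleton_sup_span_int (b : Module.Basis ι ℝ E) {v : E}
    (hv : ∀ k : ι → ℤ, k ≠ 0 → ∑ i, (k i : ℝ) * b.repr v i ≠ 0) :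
    Dense (((ℝ ∙ v).toAddSubgroup ⊔ (Submodule.span ℤ (range b)).toAddSubgroup :
      AddSubgroup E) : Set E) := by
  set H := (ℝ ∙ v).toAddSubgroup ⊔ (Submodule.span ℤ (range b)).toAddSubgroup
  have : FiniteDimensional ℝ E := .of_basis b
  by_contra hd
  have hG : H.topologicalClosure ≠ ⊤ := fun h =>
    hd (dense_iff_closure_eq.2 (by rw [← H.topologicalClosure_coe, h, AddSubgroup.coe_top]))
  obtain ⟨f, hf, hfG⟩ :=
    AddSubgroup.exists_ne_zero_forall_mem_int_of_isClosed H.isClosed_topologicalClosure hG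
  have hfH : ∀ x ∈ H, ∃ m : ℤ, f x = m := fun x hx => hfG x (H.le_topologicalClosure hx)
  have hfv : f v = 0 := eq_zero_of_forall_exists_int_mul_eq fun t => by
    simpa using hfH (t • v)
      (AddSubgroup.mem_sup_left (Submodule.smul_mem _ t (Submodule.mem_span_singleton_self v)))
  choose k hk using fun i =>
    hfH (b i) (AddSubgroup.mem_sup_right (Submodule.subset_span (mem_range_self i)))
  refine hv k (fun hk0 => hf (b.ext fun i => by simp [hk, hk0])) ?_
  calc ∑ i, (k i : ℝ) * b.repr v i = f (∑ i, b.repr v i • b i) := by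
        simp only [map_sum, map_smul, hk, smul_eq_mul, mul_comm]
    _ = 0 := by rw [b.sum_repr, hfv]

theorem exists_pos_infDist_add_smul_lt (b : Module.Basis ι ℝ E) {v : E}
    (hv : Dense (((ℝ ∙ v).toAddSubgroup ⊔ (Submodule.span ℤ (range b)).toAddSubgroup :
      AddSubgroup E) : Set E))
    (x : E) {r : ℝ} (hr : 0 < r) :
    ∃ t : ℝ, 0 < t ∧ infDist (x + t • v) (Submodule.span ℤ (range b)) < r := by
  set Λ := Submodule.span ℤ (range b)
  have : FiniteDimensional ℝ E := .of_basis b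
  set U : ℕ → Set E := fun n => ⋃ t ∈ Icc (-(n : ℝ)) n, {z | infDist (z + t • v) Λ < r}
  have hUopen : ∀ n, IsOpen (U n) := fun n => isOpen_biUnion fun t _ =>
    isOpen_lt (by fun_prop) continuous_const
  have hUmono : Monotone U := fun m n hmn => biUnion_subset_biUnion_left <|
    Icc_subset_Icc (by simpa using hmn) (by simpa using hmn)
  have hUcover : ∀ z, ∃ n, z ∈ U n := by
    intro z
    obtain ⟨y, hy, hyz⟩ := Metric.mem_closure_iff.1 (hv (-z)) r hr
    obtain ⟨a, ha, w, hw, rfl⟩ := AddSubgroup.mem_sup.1 hy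
    obtain ⟨t, rfl⟩ := Submodule.mem_span_singleton.1 ha
    refine ⟨⌈|t|⌉₊, mem_biUnion (abs_le.1 (Nat.le_ceil _)) ?_⟩
    calc infDist (z + t • v) Λ ≤ dist (z + t • v) (-w) := infDist_le_dist_of_mem (neg_mem hw)
      _ = dist (-z) (t • v + w) := by rw [dist_eq_norm, dist_eq_norm, ← norm_neg]; congr 1; abel
      _ < r := hyz
  obtain ⟨N, hN⟩ := (isCompact_closedBall (0 : E) (∑ i, ‖b i‖)).elim_directed_cover U hUopen
    (fun z _ => mem_iUnion.2 (hUcover z)) hUmono.directed_le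
  set z := x + ((N : ℝ) + 1) • v
  obtain ⟨t, ht, htr⟩ : ∃ t ∈ Icc (-(N : ℝ)) N, infDist (ZSpan.fract b z + t • v) Λ < r :=
    by simpa [U] using hN (mem_closedBall_zero_iff.2 (ZSpan.norm_fract_le b z))
  refine ⟨(N : ℝ) + 1 + t, by linarith [ht.1], ?_⟩
  have hfract :
      ZSpan.fract b z + t • v = -(ZSpan.floor b z : E) + (x + ((N : ℝ) + 1 + t) • v) := by
    rw [ZSpan.fract_apply]; module
  rwa [hfract, Metric.infDist_add_left_of_mem (neg_mem (ZSpan.floor b z).2)] at htr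

end LineModLattice

theorem intLattice_eq_span (D : ℕ) :
    intLattice D = Submodule.span ℤ (range (EuclideanSpace.basisFun (Fin D) ℝ).toBasis) := by
  ext x
  rw [SetLike.mem_coe, Module.Basis.mem_span_iff_repr_mem]
  simp [intLattice, eq_comm]

theorem freePath_lt_top_of_exists_infDist_le {D : ℕ} {r : ℝ} {x v : EucSp D}
    (h : ∃ t : ℝ, 0 < t ∧ infDist (x + t • v) (intLattice D) ≤ r) : freePath D r x v < ⊤ := by
  obtain ⟨t, ht⟩ := h
  rw [freePath]
  split_ifs
  · exact ENNReal.zero_lt_top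
  · exact (sInf_le (mem_image_of_mem ENNReal.ofReal ht)).trans_lt ENNReal.ofReal_lt_top

theorem freePath_lt_top_of_irrational_direction_general (D : ℕ)
    (r : ℝ) (hr : r ∈ Set.Ioo (0 : ℝ) (1/2 : ℝ)) (v : Sph D)
    (hv : ∀ k : Fin D → ℤ, k ≠ 0 → (∑ i, (k i : ℝ) * (v : EucSp D) i) ≠ 0)
    (x : EucSp D) :
    freePath D r x (v : EucSp D) < ⊤ := by
  set b := (EuclideanSpace.basisFun (Fin D) ℝ).toBasis
  have hdense := dense_span_singleton_sup_span_int b (v := (v : EucSp D)) (by simpa [b] using hv)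
  obtain ⟨t, ht, htr⟩ := exists_pos_infDist_add_smul_lt b hdense x hr.1
  exact freePath_lt_top_of_exists_infDist_le ⟨t, ht, by rw [intLattice_eq_span]; exact htr.le⟩

/-- If the direction `v ∈ S^{D-1}` has rationally independent components, i.e. `k · v ≠ 0`
for every nonzero `k ∈ ℤ^D`, then the free path length `τ_r(x,v)` is finite for every
starting point `x` in the billiard table `Z_r`. -/
theorem freePath_lt_top_of_irrational_direction (D : ℕ) (hD : 2 ≤ D)
    (r : ℝ) (hr : r ∈ Set.Ioo (0 : ℝ) (1/2 : ℝ)) (v : Sph D)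
    (hv : ∀ k : Fin D → ℤ, k ≠ 0 → (∑ i, (k i : ℝ) * (v : EucSp D) i) ≠ 0)
    (x : EucSp D) (hx : r < Metric.infDist x (intLattice D)) :
    freePath D r x (v : EucSp D) < ⊤ :=
  freePath_lt_top_of_irrational_direction_general D r hr v hv x
end
end

section
/- Let D ≥ 2 and let C₁, c, γ, r_* > 0. Let ρ ∈ L²(T^D) be nonnegative with ρ not almost everywhere zero, and let Φ ∈ L^∞([0,∞) × S^{D-1}) satisfy 0 ≤ Φ ≤ 1 and ∫_{S^{D-1}} Φ(t,v) dv ≥ C₁/(t r_*^{D−1}) for almost every t > 1/r_*^{D−1}. Suppose f : [0,∞) × T^D × S^{D-1} → ℝ is measurable, with f(t,·,·) ∈ L²(T^D × S^{D-1}) for a.e. t, and satisfies f(t,x,v) ≥ ρ(x − t v) Φ(t,v) almost everywhere, together with ‖f(t,·,·) − ∫_{T^D} ρ(x) dx‖_{L²(T^D × S^{D-1})} ≤ c e^{−γ t} ‖ρ‖_{L²(T^D)} for almost every t ≥ 0. Then C₁/(t r_*^{D−1}) ≤ ‖ρ‖_{L¹(T^D)}/‖ρ‖_{L²(T^D)}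 + c e^{−γ t} for almost every t > 1/r_*^{D−1}. -/
open MeasureTheory Metric Set Filter Topology
open scoped ENNReal RealInnerProductSpace

noncomputable section

/-!
For fixed `t`, the function `G(x,v) = ρ(x - t v) Φ(t,v)` satisfies `0 ≤ G ≤ f(t,·,·)`, and since
translations preserve Haar measure on the torus, `‖G‖₂ = ‖ρ‖₂ ‖Φ(t,·)‖₂`. Minkowski's inequality
against the constant `∫ ρ` then gives `‖ρ‖₂ ‖Φ(t,·)‖₂ ≤ ∫ ρ + c e^{-γ t} ‖ρ‖₂`, and on the
probability space `S^{D-1}` Cauchy–Schwarz gives `∫ Φ(t,v) dv ≤ ‖Φ(t,·)‖₂`.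
-/

open ProbabilityTheory

section L2
variable {Ω : Type*} [MeasurableSpace Ω] {μ : Measure Ω} [IsProbabilityMeasure μ]

theorem sq_integral_le_integral_sq {f : Ω → ℝ} (hf : MemLp f 2 μ) :
    (∫ x, f x ∂μ) ^ 2 ≤ ∫ x, f x ^ 2 ∂μ := by
  have := variance_nonneg f μ
  rw [variance_eq_sub hf] at this
  simpa [sub_nonneg] using this

theorem abs_integral_le_sqrt_integral_sq {f : Ω → ℝ} (hf : MemLp f 2 μ) :
    |∫ x, f x ∂μ| ≤ Real.sqrt (∫ x, f x ^ 2 ∂μ) :=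
  Real.abs_le_sqrt (sq_integral_le_integral_sq hf)

theorem sqrt_integral_sq_le_abs_add_sqrt_integral_sub_sq {f : Ω → ℝ} (hf : MemLp f 2 μ)
    (a : ℝ) :
    Real.sqrt (∫ x, f x ^ 2 ∂μ) ≤ |a| + Real.sqrt (∫ x, (f x - a) ^ 2 ∂μ) := by
  set h := fun x => f x - a
  have hh : MemLp h 2 μ := hf.sub (memLp_const a)
  have hexpand :
      ∫ x, f x ^ 2 ∂μ = ∫ x, h x ^ 2 ∂μ + 2 * a * ∫ x, h x ∂μ + a ^ 2 := by
    have hint := hh.integrable one_le_two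
    calc ∫ x, f x ^ 2 ∂μ = ∫ x, (h x ^ 2 + 2 * a * h x + a ^ 2) ∂μ := by
          simp only [h]; congr 1; ext x; ring
      _ = _ := by
          have hint' : Integrable (fun x => h x ^ 2 + 2 * a * h x) μ :=
            hh.integrable_sq.add (hint.const_mul _)
          rw [integral_add hint' (integrable_const _),
            integral_add hh.integrable_sq (hint.const_mul _), integral_const_mul]
          simp
  have hcross : 2 * a * ∫ x, h x ∂μ ≤ 2 * |a| * Real.sqrt (∫ x, h x ^ 2 ∂μ) := by
    calc 2 * a * ∫ x, h x ∂μ ≤ 2 * |a| * |∫ x, h x ∂μ| := by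
          have := le_abs_self (a * ∫ x, h x ∂μ)
          rw [abs_mul] at this
          linarith
      _ ≤ _ := by gcongr; exact abs_integral_le_sqrt_integral_sq hh
  refine Real.sqrt_le_iff.mpr ⟨by positivity, ?_⟩
  rw [hexpand, add_sq, Real.sq_sqrt (integral_nonneg fun x => sq_nonneg _), sq_abs]
  linarith

end L2

section Translation
variable {G V : Type*} [MeasurableSpace G] [AddGroup G] [MeasurableAdd G] [MeasurableSub₂ G]
  [MeasurableSpace V] {μ : Measure G} {ν : Measure V} {a : V → G}

theorem measurePreserving_sub_prod [SFinite μ] [μ.IsAddRightInvariant] [SFinite ν]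
    (ha : Measurable a) :
    MeasurePreserving (fun p : G × V => (p.1 - a p.2, p.2)) (μ.prod ν) (μ.prod ν) := by
  have hskew : MeasurePreserving (fun q : V × G => (q.1, q.2 - a q.1)) (ν.prod μ) (ν.prod μ) :=
    (MeasurePreserving.id ν).skew_product (g := fun v x => x - a v)
      (measurable_snd.sub (ha.comp measurable_fst))
      (.of_forall fun v => (measurePreserving_sub_right μ (a v)).map_eq)
  exact Measure.measurePreserving_swap.comp (hskew.comp Measure.measurePreserving_swap)

theorem integral_prod_comp_sub_mul [SFinite μ] [μ.IsAddRightInvariant] [SFinite ν]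
    (ha : Measurable a) {g : G → ℝ} {h : V → ℝ} (hg : AEStronglyMeasurable g μ)
    (hh : AEStronglyMeasurable h ν) :
    ∫ p, g (p.1 - a p.2) * h p.2 ∂μ.prod ν = (∫ x, g x ∂μ) * ∫ v, h v ∂ν := by
  have hS := measurePreserving_sub_prod (ν := ν) (μ := μ) ha
  rw [← integral_prod_mul]
  conv_rhs => rw [← hS.map_eq]
  refine (integral_map (f := fun z : G × V => g z.1 * h z.2) hS.aemeasurable ?_).symm
  rw [hS.map_eq]
  exact hg.comp_fst.mul hh.comp_snd

theorem integral_le_of_comp_sub_mul_le [IsProbabilityMeasure μ] [μ.IsAddRightInvariant]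
    [IsProbabilityMeasure ν] (ha : Measurable a)
    {ρ : G → ℝ} (hρ2 : MemLp ρ 2 μ) (hρ0 : 0 ≤ᵐ[μ] ρ) (hρne : ¬ ρ =ᵐ[μ] 0)
    {φ : V → ℝ} (hφ2 : MemLp φ 2 ν) (hφ0 : 0 ≤ᵐ[ν] φ)
    {F : G × V → ℝ} (hF2 : MemLp F 2 (μ.prod ν))
    (hF : ∀ᵐ p ∂μ.prod ν, ρ (p.1 - a p.2) * φ p.2 ≤ F p) {ε : ℝ}
    (hε : Real.sqrt (∫ p, (F p - ∫ x, ρ x ∂μ) ^ 2 ∂μ.prod ν)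
      ≤ ε * Real.sqrt (∫ x, ρ x ^ 2 ∂μ)) :
    ∫ v, φ v ∂ν ≤ (∫ x, ρ x ∂μ) / Real.sqrt (∫ x, ρ x ^ 2 ∂μ) + ε := by
  set A := ∫ x, ρ x ∂μ
  set B := Real.sqrt (∫ x, ρ x ^ 2 ∂μ)
  have hA : 0 ≤ A := integral_nonneg_of_ae hρ0
  have hB : 0 < B := by
    refine Real.sqrt_pos.mpr ((integral_nonneg fun x => sq_nonneg _).lt_of_ne fun h0 => hρne ?_)
    filter_upwards [(integral_eq_zero_iff_of_nonneg (fun x => sq_nonneg (ρ x))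
      hρ2.integrable_sq).mp h0.symm] with x hx
    exact pow_eq_zero_iff two_ne_zero |>.mp hx
  have hshift : MeasurePreserving (fun p : G × V => p.1 - a p.2) (μ.prod ν) μ :=
    measurePreserving_fst.comp (measurePreserving_sub_prod ha)
  have hG0 : ∀ᵐ p ∂μ.prod ν, 0 ≤ ρ (p.1 - a p.2) * φ p.2 := by
    filter_upwards [hshift.quasiMeasurePreserving.ae hρ0,
      measurePreserving_snd.quasiMeasurePreserving.ae hφ0] with p hρp hφp
    exact mul_nonneg hρp hφp
  have hGsq : ∫ p, (ρ (p.1 - a p.2) * φ p.2) ^ 2 ∂μ.prod ν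
      = (∫ x, ρ x ^ 2 ∂μ) * ∫ v, φ v ^ 2 ∂ν := by
    simp_rw [mul_pow]
    exact integral_prod_comp_sub_mul ha (hρ2.1.pow 2) (hφ2.1.pow 2)
  have hGF :
      ∫ p, (ρ (p.1 - a p.2) * φ p.2) ^ 2 ∂μ.prod ν ≤ ∫ p, F p ^ 2 ∂μ.prod ν :=
    integral_mono_of_nonneg (.of_forall fun p => sq_nonneg _) hF2.integrable_sq
      (by filter_upwards [hG0, hF] with p h0 h1 using pow_le_pow_left₀ h0 h1 2)
  have key : B * ∫ v, φ v ∂ν ≤ A + ε * B :=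
    calc B * ∫ v, φ v ∂ν ≤ B * Real.sqrt (∫ v, φ v ^ 2 ∂ν) :=
          mul_le_mul_of_nonneg_left
            ((le_abs_self _).trans (abs_integral_le_sqrt_integral_sq hφ2)) hB.le
      _ = Real.sqrt (∫ p, (ρ (p.1 - a p.2) * φ p.2) ^ 2 ∂μ.prod ν) := by
          rw [hGsq, Real.sqrt_mul (integral_nonneg fun x => sq_nonneg _)]
      _ ≤ Real.sqrt (∫ p, F p ^ 2 ∂μ.prod ν) := Real.sqrt_le_sqrt hGF
      _ ≤ |A| + Real.sqrt (∫ p, (F p - A) ^ 2 ∂μ.prod ν) :=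
          sqrt_integral_sq_le_abs_add_sqrt_integral_sub_sq hF2 A
      _ ≤ A + ε * B := by rw [abs_of_nonneg hA]; linarith
  rw [div_add' _ _ _ hB.ne', le_div_iff₀ hB]
  linarith

end Translation

theorem isProbabilityMeasure_sphProb {D : ℕ} (hD : D ≠ 0) :
    IsProbabilityMeasure (sphProb D) := by
  constructor
  rw [sphProb, sphArea, Measure.smul_apply, smul_eq_mul]
  refine ENNReal.inv_mul_cancel ?_ (measure_ne_top _ _)
  rw [Measure.toSphere_apply_univ, finrank_euclideanSpace_fin]
  exact mul_ne_zero (by exact_mod_cast hD) (measure_ball_pos _ _ one_pos).ne'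

instance (D : ℕ) : IsProbabilityMeasure (volume : Measure (Torus D)) := by
  have : IsProbabilityMeasure (volume : Measure (AddCircle (1 : ℝ))) :=
    ⟨by rw [AddCircle.measure_univ]; norm_num⟩
  infer_instance

theorem continuous_toTorus (D : ℕ) : Continuous (toTorus D) :=
  continuous_pi fun i => (AddCircle.continuous_mk' 1).comp ((continuous_apply i).comp (by fun_prop))

theorem comparison_inequality_general (D : ℕ) (hD : 2 ≤ D)
    (C₁ c γ rstar : ℝ) (hrstar : 0 < rstar)
    (ρ : Torus D → ℝ) (hρ2 : MemLp ρ 2 (volume : Measure (Torus D)))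
    (hρ0 : 0 ≤ᵐ[(volume : Measure (Torus D))] ρ)
    (hρne : ¬ ρ =ᵐ[(volume : Measure (Torus D))] 0)
    (Φ : ℝ → Sph D → ℝ)
    (hΦmeas : AEStronglyMeasurable (fun p : ℝ × Sph D => Φ p.1 p.2)
      ((volume.restrict (Set.Ici (0:ℝ))).prod (sphProb D)))
    (hΦ01 : ∀ t v, 0 ≤ Φ t v ∧ Φ t v ≤ 1)
    (hΦlow : ∀ᵐ t ∂(volume.restrict {t : ℝ | 1 / rstar ^ (D-1) < t}),
      C₁ / (t * rstar ^ (D-1)) ≤ ∫ v, Φ t v ∂(sphProb D))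
    (f : ℝ → Torus D → Sph D → ℝ)
    (hfL2 : ∀ᵐ t ∂(volume.restrict (Set.Ici (0:ℝ))),
      MemLp (fun p : Torus D × Sph D => f t p.1 p.2) 2
        ((volume : Measure (Torus D)).prod (sphProb D)))
    (hflow : ∀ᵐ p ∂((volume.restrict (Set.Ici (0:ℝ))).prod
        ((volume : Measure (Torus D)).prod (sphProb D))),
      ρ (p.2.1 - toTorus D (p.1 • (p.2.2 : EucSp D))) * Φ p.1 p.2.2 ≤ f p.1 p.2.1 p.2.2)
    (hfdecay : ∀ᵐ t ∂(volume.restrict (Set.Ici (0:ℝ))),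
      Real.sqrt (∫ x : Torus D, ∫ v, (f t x v - ∫ y : Torus D, ρ y) ^ 2 ∂(sphProb D))
        ≤ c * Real.exp (-γ * t) * Real.sqrt (∫ y : Torus D, (ρ y) ^ 2)) :
    ∀ᵐ t ∂(volume.restrict {t : ℝ | 1 / rstar ^ (D-1) < t}),
      C₁ / (t * rstar ^ (D-1)) ≤
        (∫ y : Torus D, |ρ y|) / Real.sqrt (∫ y : Torus D, (ρ y) ^ 2)
          + c * Real.exp (-γ * t) := by
  have := isProbabilityMeasure_sphProb (by omega : D ≠ 0)
  have hpos : {t : ℝ | 1 / rstar ^ (D-1) < t} ⊆ Set.Ici (0:ℝ) := fun t ht =>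
    (lt_trans (by positivity : (0:ℝ) < 1 / rstar ^ (D-1)) ht).le
  filter_upwards [hΦlow, ae_restrict_of_ae_restrict_of_subset hpos hΦmeas.prodMk_left,
    ae_restrict_of_ae_restrict_of_subset hpos hfL2,
    ae_restrict_of_ae_restrict_of_subset hpos (Measure.ae_ae_of_ae_prod hflow),
    ae_restrict_of_ae_restrict_of_subset hpos hfdecay] with t hlow hΦt hft hdom hdecay
  have hΦ2 : MemLp (Φ t) 2 (sphProb D) := MemLp.of_bound hΦt 1 (.of_forall fun v => by
    rw [Real.norm_eq_abs, abs_of_nonneg (hΦ01 t v).1]; exact (hΦ01 t v).2)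
  have hshift : Measurable fun v : Sph D => toTorus D (t • (v : EucSp D)) :=
    ((continuous_toTorus D).comp (by fun_prop)).measurable
  calc C₁ / (t * rstar ^ (D-1)) ≤ ∫ v, Φ t v ∂(sphProb D) := hlow
    _ ≤ _ := integral_le_of_comp_sub_mul_le hshift hρ2 hρ0 hρne hΦ2
        (.of_forall fun v => (hΦ01 t v).1) hft hdom
        (by rwa [integral_prod (fun p : Torus D × Sph D => (f t p.1 p.2 - ∫ y, ρ y) ^ 2)
          (hft.sub (memLp_const _)).integrable_sq])
    _ = _ := by rw [integral_congr_ae (hρ0.mono fun y hy => abs_of_nonneg hy)]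

/-- The key comparison inequality in the proof of the main theorem: if `f(t,x,v)` dominates
`ρ(x - t v) Φ(t,v)` with `∫ Φ(t,v) dv ≥ C₁/(t r_*^{D-1})`, and if `f` converges to the
constant `∫ ρ dx` in `L²` at exponential rate `c e^{-γ t}`, then
`C₁/(t r_*^{D-1}) ≤ ‖ρ‖_{L¹}/‖ρ‖_{L²} + c e^{-γ t}` for a.e. `t > 1/r_*^{D-1}`. -/
theorem comparison_inequality (D : ℕ) (hD : 2 ≤ D)
    (C₁ c γ rstar : ℝ) (hC₁ : 0 < C₁) (hc : 0 < c) (hγ : 0 < γ) (hrstar : 0 < rstar)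
    (ρ : Torus D → ℝ) (hρ2 : MemLp ρ 2 (volume : Measure (Torus D)))
    (hρ0 : 0 ≤ᵐ[(volume : Measure (Torus D))] ρ)
    (hρne : ¬ ρ =ᵐ[(volume : Measure (Torus D))] 0)
    (Φ : ℝ → Sph D → ℝ)
    (hΦmeas : AEStronglyMeasurable (fun p : ℝ × Sph D => Φ p.1 p.2)
      ((volume.restrict (Set.Ici (0:ℝ))).prod (sphProb D)))
    (hΦ01 : ∀ t v, 0 ≤ Φ t v ∧ Φ t v ≤ 1)
    (hΦlow : ∀ᵐ t ∂(volume.restrict {t : ℝ | 1 / rstar ^ (D-1) < t}),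
      C₁ / (t * rstar ^ (D-1)) ≤ ∫ v, Φ t v ∂(sphProb D))
    (f : ℝ → Torus D → Sph D → ℝ)
    (hfmeas : AEStronglyMeasurable (fun p : ℝ × Torus D × Sph D => f p.1 p.2.1 p.2.2)
      ((volume.restrict (Set.Ici (0:ℝ))).prod
        ((volume : Measure (Torus D)).prod (sphProb D))))
    (hfL2 : ∀ᵐ t ∂(volume.restrict (Set.Ici (0:ℝ))),
      MemLp (fun p : Torus D × Sph D => f t p.1 p.2) 2
        ((volume : Measure (Torus D)).prod (sphProb D)))
    (hflow : ∀ᵐ p ∂((volume.restrict (Set.Ici (0:ℝ))).prod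
        ((volume : Measure (Torus D)).prod (sphProb D))),
      ρ (p.2.1 - toTorus D (p.1 • (p.2.2 : EucSp D))) * Φ p.1 p.2.2 ≤ f p.1 p.2.1 p.2.2)
    (hfdecay : ∀ᵐ t ∂(volume.restrict (Set.Ici (0:ℝ))),
      Real.sqrt (∫ x : Torus D, ∫ v, (f t x v - ∫ y : Torus D, ρ y) ^ 2 ∂(sphProb D))
        ≤ c * Real.exp (-γ * t) * Real.sqrt (∫ y : Torus D, (ρ y) ^ 2)) :
    ∀ᵐ t ∂(volume.restrict {t : ℝ | 1 / rstar ^ (D-1) < t}),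
      C₁ / (t * rstar ^ (D-1)) ≤
        (∫ y : Torus D, |ρ y|) / Real.sqrt (∫ y : Torus D, (ρ y) ^ 2)
          + c * Real.exp (-γ * t) :=
  comparison_inequality_general D hD C₁ c γ rstar hrstar ρ hρ2 hρ0 hρne Φ hΦmeas hΦ01 hΦlow f hfL2
    hflow hfdecay
end
end
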